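/- arXiv:1502.04210 — 2 statements merged into one kernel-verified Lean document; each statement's English description precedes it below -/
import Mathlib

section
/- The map φ : F_4² → M_2(F_2) defined by φ((a+bω, c+dω)) = [[a+d, b+c],[b+c+d, a+b+d]] is a weight isometry: for every α ∈ F_4², the Hamming weight of α (number of nonzero coordinates in F_4²) equals the Bachoc weight of φ(α), where the Bachoc weight of a matrix A ∈ M_2(F_2) is 0 if A = 0, 1 if A is invertible, and 2 otherwise. -/
/-! Since `ω ∉ F₂`, every `x ∈ F₄` is uniquely `a + bω` with `a, b ∈ F₂`. Writing also
`y = c + dω`, the determinant of `φ (x, y)` is `N x + N y`, where `N (a + bω) = a² + ab + b²`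
is the norm of `F₄ / F₂`; it equals `1` exactly on nonzero elements. So `φ (x, y)` is
invertible iff exactly one of `x, y` vanishes, and it is zero iff both do. -/

open Classical in
/-- Hamming weight on K², counting nonzero coordinates. -/
noncomputable def hammingWt {K : Type} [Zero K] (α : K × K) : ℕ :=
  (if α.1 ≠ 0 then 1 else 0) + (if α.2 ≠ 0 then 1 else 0)

open Classical in
/-- Bachoc weight on M₂(F₂): 0 on the zero matrix, 1 on invertible matrices,
and p = 2 otherwise. -/
noncomputable def bachocWt (A : Matrix (Fin 2) (Fin 2) (ZMod 2)) : ℕ :=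
  if A = 0 then 0 else if IsUnit A then 1 else 2

theorem bachocWt_eq_ite_det (A : Matrix (Fin 2) (Fin 2) (ZMod 2)) :
    bachocWt A = if A = 0 then 0 else if A.det = 1 then 1 else 2 := by
  have isUnit_iff : ∀ x : ZMod 2, IsUnit x ↔ x = 1 := by decide
  unfold bachocWt
  simp only [Matrix.isUnit_iff_isUnit_det, isUnit_iff]

theorem bachocWt_eq_hammingWt_coords (a b c d : ZMod 2) :
    bachocWt !![a + d, b + c; b + c + d, a + b + d] =
      (if (a, b) ≠ 0 then 1 else 0) + (if (c, d) ≠ 0 then 1 else 0) := by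
  rw [bachocWt_eq_ite_det]
  revert a b c d
  decide

theorem injective_algebraMap_add_smul {F K : Type*} [Field F] [Ring K] [Nontrivial K]
    [Algebra F K] {ω : K} (hω : ω ∉ Set.range (algebraMap F K)) :
    Function.Injective fun p : F × F => algebraMap F K p.1 + p.2 • ω := by
  rintro ⟨a, b⟩ ⟨a', b'⟩ h
  have hb : b = b' := by
    by_contra hne
    have hsub : b - b' ≠ 0 := sub_ne_zero.mpr hne
    apply hω
    refine ⟨(b - b')⁻¹ * (a' - a), ?_⟩
    have : (b - b') • ω = algebraMap F K (a' - a) := by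
      rw [map_sub, sub_smul, sub_eq_sub_iff_add_eq_add, add_comm]
      exact h
    rw [map_mul, ← Algebra.smul_def, ← this, smul_smul, inv_mul_cancel₀ hsub, one_smul]
  subst hb
  simpa using (algebraMap F K).injective (add_right_cancel h)

theorem notMem_range_algebraMap_of_sq_eq_add_one {K : Type*} [Ring K] [Nontrivial K]
    [Algebra (ZMod 2) K] {ω : K} (hω : ω ^ 2 = ω + 1) :
    ω ∉ Set.range (algebraMap (ZMod 2) K) := by
  have two_eq_zero : (1 : K) + 1 = 0 := by
    simpa using congrArg (algebraMap (ZMod 2) K) (show (1 + 1 : ZMod 2) = 0 from rfl)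
  rintro ⟨a, rfl⟩
  rcases (by decide : ∀ a : ZMod 2, a = 0 ∨ a = 1) a with rfl | rfl
  · simp at hω
  · simp [two_eq_zero] at hω

theorem bijective_algebraMap_add_smul_of_card_eq_four {K : Type*} [Field K] [Fintype K]
    [Algebra (ZMod 2) K] (hK : Fintype.card K = 4) {ω : K} (hω : ω ^ 2 = ω + 1) :
    Function.Bijective fun p : ZMod 2 × ZMod 2 => algebraMap (ZMod 2) K p.1 + p.2 • ω := by
  rw [Fintype.bijective_iff_injective_and_card]
  exact ⟨injective_algebraMap_add_smul (notMem_range_algebraMap_of_sq_eq_add_one hω), by simp [hK]⟩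

/-- The map φ : F₄² → M₂(F₂) is a weight isometry from the Hamming weight
to the Bachoc weight. -/
theorem stmt_5 (K : Type) [Field K] [Fintype K] [Algebra (ZMod 2) K]
    (hK : Fintype.card K = 4) (ω : K) (hω : ω ^ 2 = ω + 1)
    (φ : K × K → Matrix (Fin 2) (Fin 2) (ZMod 2))
    (hφ : ∀ a b c d : ZMod 2,
      φ (algebraMap (ZMod 2) K a + b • ω, algebraMap (ZMod 2) K c + d • ω) =
        !![a + d, b + c; b + c + d, a + b + d]) :
    ∀ α : K × K, hammingWt α = bachocWt (φ α) := by
  have hf := bijective_algebraMap_add_smul_of_card_eq_four hK hω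
  have coords_ne_zero (a b : ZMod 2) : algebraMap (ZMod 2) K a + b • ω ≠ 0 ↔ (a, b) ≠ 0 :=
    hf.injective.ne_iff' (x := (a, b)) (y := 0) (z := 0) (by simp)
  rintro ⟨x, y⟩
  obtain ⟨⟨a, b⟩, rfl⟩ := hf.surjective x
  obtain ⟨⟨c, d⟩, rfl⟩ := hf.surjective y
  rw [hφ, bachocWt_eq_hammingWt_coords]
  simp only [hammingWt, coords_ne_zero]
end

section
/- Let C be a [k×ℓ, ρ, δ] linear rank-metric code over F_q. Then the lift Λ(C) = {row space of (I_k | A) : A ∈ C} is a set of k-dimensional subspaces of F_q^{k+ℓ} with |Λ(C)| = q^ρ, and the minimum subspace distance between distinct elements of Λ(C) is 2δ. -/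
/-- The row space of the lifted matrix (I_k | A), a subspace of F^{k+ℓ}. -/
def matLift {F : Type} [Field F] {k ℓ : ℕ} (A : Matrix (Fin k) (Fin ℓ) F) :
    Submodule F (Fin (k + ℓ) → F) :=
  Submodule.span F
    (Set.range fun i : Fin k => Fin.append ((1 : Matrix (Fin k) (Fin k) F) i) (A i))

/-- The subspace distance d_S(U,V) = dim U + dim V - 2 dim(U ⊓ V). -/
noncomputable def subspaceDist {F : Type} [Field F] {n : ℕ}
    (U V : Submodule F (Fin n → F)) : ℕ :=
  Module.finrank F U + Module.finrank F V -
    2 * Module.finrank F (U ⊓ V : Submodule F (Fin n → F))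
/-! `⟨(I_k | A)⟩` is the graph of the row-vector map `x ↦ x A`, so it is `k`-dimensional and
determines `A`. Two such graphs meet exactly over `ker (x ↦ x (A - B))`, so their intersection has
dimension `k - rank (A - B)` and `d_S(⟨L A⟩, ⟨L B⟩) = 2 rank (A - B)`. Since `C` is linear, the
differences of distinct codewords are exactly its nonzero elements. -/

open Matrix

section Lift

variable {F : Type} [Field F] {k ℓ : ℕ}

def liftMap (A : Matrix (Fin k) (Fin ℓ) F) : (Fin k → F) →ₗ[F] (Fin (k + ℓ) → F) where
  toFun x := Fin.append x (x ᵥ* A)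
  map_add' x y := funext fun j => by
    refine Fin.addCases (fun i => ?_) (fun i => ?_) j <;> simp [add_vecMul]
  map_smul' c x := funext fun j => by
    refine Fin.addCases (fun i => ?_) (fun i => ?_) j <;> simp [smul_vecMul]

@[simp] lemma liftMap_apply (A : Matrix (Fin k) (Fin ℓ) F) (x : Fin k → F) :
    liftMap A x = Fin.append x (x ᵥ* A) := rfl

lemma liftMap_eq_liftMap_iff {A B : Matrix (Fin k) (Fin ℓ) F} {x y : Fin k → F} :
    liftMap A x = liftMap B y ↔ x = y ∧ x ᵥ* A = y ᵥ* B := by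
  refine ⟨fun h => ⟨funext fun i => ?_, funext fun j => ?_⟩, fun ⟨hxy, hA⟩ => by simp [hxy, ← hA]⟩
  · simpa using congrFun h (Fin.castAdd ℓ i)
  · simpa using congrFun h (Fin.natAdd k j)

lemma liftMap_injective (A : Matrix (Fin k) (Fin ℓ) F) : Function.Injective (liftMap A) :=
  fun _ _ h => (liftMap_eq_liftMap_iff.1 h).1

lemma matLift_eq_range (A : Matrix (Fin k) (Fin ℓ) F) :
    matLift A = LinearMap.range (liftMap A) := by
  suffices (fun i => Fin.append ((1 : Matrix (Fin k) (Fin k) F) i) (A i)) =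
      liftMap A ∘ Pi.basisFun F (Fin k) by
    rw [matLift, this, Set.range_comp, ← Submodule.map_span, (Pi.basisFun F (Fin k)).span_eq,
      LinearMap.range_eq_map]
  funext i
  simp only [Function.comp_apply, Pi.basisFun_apply, liftMap_apply, single_one_vecMul, row_apply']
  rw [← vecMul_one (Pi.single i 1), single_one_vecMul, row_apply']

lemma finrank_matLift (A : Matrix (Fin k) (Fin ℓ) F) : Module.finrank F (matLift A) = k := by
  rw [matLift_eq_range, LinearMap.finrank_range_of_inj (liftMap_injective A),
    Module.finrank_fin_fun]

lemma matLift_injective : Function.Injective (matLift (F := F) (k := k) (ℓ := ℓ)) := by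
  intro A B h
  ext i j
  obtain ⟨x, hx⟩ : liftMap A (Pi.single i 1) ∈ LinearMap.range (liftMap B) := by
    rw [← matLift_eq_range, ← h, matLift_eq_range]
    exact LinearMap.mem_range_self _ _
  obtain ⟨rfl, hB⟩ := liftMap_eq_liftMap_iff.1 hx
  simpa [single_one_vecMul] using congrFun hB.symm j

lemma matLift_inf_matLift (A B : Matrix (Fin k) (Fin ℓ) F) :
    matLift A ⊓ matLift B = (LinearMap.ker (vecMulLinear (A - B))).map (liftMap A) := by
  ext v
  simp only [matLift_eq_range, Submodule.mem_inf, LinearMap.mem_range, Submodule.mem_map,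
    LinearMap.mem_ker, vecMulLinear_apply, vecMul_sub, sub_eq_zero]
  constructor
  · rintro ⟨⟨x, rfl⟩, y, hy⟩
    obtain ⟨rfl, hB⟩ := liftMap_eq_liftMap_iff.1 hy
    exact ⟨y, hB.symm, rfl⟩
  · rintro ⟨x, hx, rfl⟩
    exact ⟨⟨x, rfl⟩, x, liftMap_eq_liftMap_iff.2 ⟨rfl, hx.symm⟩⟩

lemma subspaceDist_matLift (A B : Matrix (Fin k) (Fin ℓ) F) :
    subspaceDist (matLift A) (matLift B) = 2 * (A - B).rank := by
  have hinf : Module.finrank F ↥(matLift A ⊓ matLift B) =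
      Module.finrank F (LinearMap.ker (vecMulLinear (A - B))) := by
    rw [matLift_inf_matLift]
    exact (Submodule.equivMapOfInjective _ (liftMap_injective A) _).finrank_eq.symm
  have hrank : (A - B).rank = Module.finrank F (LinearMap.range (vecMulLinear (A - B))) := by
    rw [← rank_transpose, rank, mulVecLin_transpose]
  have hrn := (vecMulLinear (A - B)).finrank_range_add_finrank_ker
  rw [Module.finrank_fin_fun] at hrn
  rw [subspaceDist, finrank_matLift, finrank_matLift, hinf]
  omega

end Lift

lemma Nat.sInf_image_mul_left (c : ℕ) (s : Set ℕ) : sInf ((c * ·) '' s) = c * sInf s := by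
  rcases s.eq_empty_or_nonempty with rfl | hs
  · simp
  · have hmono : Monotone (c * ·) := fun _ _ h => Nat.mul_le_mul_left c h
    exact (hmono.map_csInf hs).symm

section Code

variable {F : Type} [Field F] {k ℓ : ℕ}

lemma ncard_image_matLift (C : Submodule F (Matrix (Fin k) (Fin ℓ) F)) :
    (matLift '' (C : Set (Matrix (Fin k) (Fin ℓ) F))).ncard = Nat.card F ^ Module.finrank F C := by
  rw [Set.ncard_image_of_injective _ matLift_injective, ← Nat.card_coe_set_eq,
    SetLike.coe_sort_coe, Module.natCard_eq_pow_finrank (K := F)]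

lemma sInf_subspaceDist_image_matLift (C : Submodule F (Matrix (Fin k) (Fin ℓ) F)) :
    sInf {n | ∃ U ∈ matLift '' (C : Set (Matrix (Fin k) (Fin ℓ) F)),
        ∃ V ∈ matLift '' (C : Set (Matrix (Fin k) (Fin ℓ) F)), U ≠ V ∧ n = subspaceDist U V} =
      2 * sInf {n | ∃ A ∈ C, A ≠ 0 ∧ n = A.rank} := by
  rw [← Nat.sInf_image_mul_left]
  congr 1
  ext n
  simp only [Set.mem_ofPred_eq, Set.mem_image, SetLike.mem_coe]
  constructor
  · rintro ⟨_, ⟨A, hA, rfl⟩, _, ⟨B, hB, rfl⟩, hAB, rfl⟩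
    exact ⟨(A - B).rank, ⟨A - B, C.sub_mem hA hB, sub_ne_zero.2 (ne_of_apply_ne _ hAB), rfl⟩,
      (subspaceDist_matLift A B).symm⟩
  · rintro ⟨_, ⟨A, hA, hA0, rfl⟩, rfl⟩
    exact ⟨_, ⟨A, hA, rfl⟩, _, ⟨0, C.zero_mem, rfl⟩, matLift_injective.ne hA0,
      by rw [subspaceDist_matLift, sub_zero]⟩

end Code

theorem stmt_10_general (F : Type) [Field F] [Fintype F] (k ℓ ρ δ : ℕ)
    (C : Submodule F (Matrix (Fin k) (Fin ℓ) F))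
    (hρ : Module.finrank F C = ρ)
    (hδ : sInf {n : ℕ | ∃ A ∈ C, A ≠ 0 ∧ n = A.rank} = δ) :
    (∀ A ∈ C, Module.finrank F (matLift A) = k) ∧
    ((fun A => matLift A) '' (C : Set (Matrix (Fin k) (Fin ℓ) F))).ncard =
      Fintype.card F ^ ρ ∧
    sInf {n : ℕ |
        ∃ U ∈ (fun A => matLift A) '' (C : Set (Matrix (Fin k) (Fin ℓ) F)),
        ∃ V ∈ (fun A => matLift A) '' (C : Set (Matrix (Fin k) (Fin ℓ) F)),
          U ≠ V ∧ n = subspaceDist U V} = 2 * δ := by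
  refine ⟨fun A _ => finrank_matLift A, ?_, ?_⟩
  · rw [ncard_image_matLift, Nat.card_eq_fintype_card, hρ]
  · rw [sInf_subspaceDist_image_matLift, hδ]

/-- The lift of a [k×ℓ, ρ, δ] rank-metric code is a (k+ℓ, q^ρ, 2δ, k)_q
Grassmannian code. -/
theorem stmt_10 (F : Type) [Field F] [Fintype F] (k ℓ ρ δ : ℕ)
    (C : Submodule F (Matrix (Fin k) (Fin ℓ) F)) (hC : Nontrivial C)
    (hρ : Module.finrank F C = ρ)
    (hδ : sInf {n : ℕ | ∃ A ∈ C, A ≠ 0 ∧ n = A.rank} = δ) :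
    (∀ A ∈ C, Module.finrank F (matLift A) = k) ∧
    ((fun A => matLift A) '' (C : Set (Matrix (Fin k) (Fin ℓ) F))).ncard =
      Fintype.card F ^ ρ ∧
    sInf {n : ℕ |
        ∃ U ∈ (fun A => matLift A) '' (C : Set (Matrix (Fin k) (Fin ℓ) F)),
        ∃ V ∈ (fun A => matLift A) '' (C : Set (Matrix (Fin k) (Fin ℓ) F)),
          U ≠ V ∧ n = subspaceDist U V} = 2 * δ :=
  stmt_10_general F k ℓ ρ δ C hρ hδ
end
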